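/- Fix α > −1. Let f ∈ L²((0,∞), μ_α), let k ∈ ℕ, and for β > 0 set f_β(x) = f((β/2)(1−x))·1_{[−1,1]}(x). Then lim_{β→∞} ⟨f_β, P_k^{(α,β)}⟩_{μ_{α,β}} = ⟨f, L_k^α⟩_{μ_α}, where ⟨g,h⟩_{μ_{α,β}} = ∫_{−1}^1 gh dμ_{α,β} and ⟨g,h⟩_{μ_α} = ∫_0^∞ gh dμ_α. -/

import Mathlib

open MeasureTheory Filter Real
open scoped ENNReal NNReal

noncomputable section

/-- Jacobi polynomial `P_n^{(a,b)}` in Szegő's normalization. -/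
def jacobiP (a b : ℝ) (n : ℕ) (x : ℝ) : ℝ :=
  ∑ ν ∈ Finset.range (n + 1),
    (Real.Gamma (n + a + 1) / (Real.Gamma (a + ν + 1) * (Nat.factorial (n - ν)))) *
    (Real.Gamma (n + b + 1) / (Real.Gamma (n + b - ν + 1) * (Nat.factorial ν))) *
    ((x - 1) / 2) ^ ν * ((x + 1) / 2) ^ (n - ν)

/-- Jacobi (beta) measure on `(-1,1)`. -/
def jacobiMeasure (a b : ℝ) : Measure ℝ :=
  (volume.restrict (Set.Ioo (-1 : ℝ) 1)).withDensity fun x =>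
    ENNReal.ofReal ((1 - x) ^ a * (1 + x) ^ b *
      (Real.Gamma (a + b + 2) / (2 ^ (a + b + 1) * Real.Gamma (a + 1) * Real.Gamma (b + 1))))

/-- Gegenbauer polynomial `C_n^l`. -/
def gegenbauerC (l : ℝ) (n : ℕ) (x : ℝ) : ℝ :=
  (Real.Gamma (l + 1 / 2) * Real.Gamma (n + 2 * l)) /
    (Real.Gamma (2 * l) * Real.Gamma (n + l + 1 / 2)) *
    jacobiP (l - 1 / 2) (l - 1 / 2) n x

/-- Gegenbauer measure on `(-1,1)`. -/
def gegenbauerMeasure (l : ℝ) : Measure ℝ := jacobiMeasure (l - 1 / 2) (l - 1 / 2)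

/-- Gaussian measure `γ` on `ℝ`. -/
def gaussMeasure : Measure ℝ :=
  volume.withDensity fun x => ENNReal.ofReal (Real.exp (-x ^ 2) / Real.sqrt Real.pi)

/-- Physicists' Hermite polynomial `H_n`. -/
def hermiteH : ℕ → ℝ → ℝ
  | 0, _ => 1
  | 1, x => 2 * x
  | n + 2, x => 2 * x * hermiteH (n + 1) x - 2 * (n + 1) * hermiteH n x

/-- Laguerre polynomial `L_n^a` in Szegő's normalization. -/
def laguerreL (a : ℝ) (n : ℕ) (x : ℝ) : ℝ :=
  ∑ m ∈ Finset.range (n + 1),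
    (-1 : ℝ) ^ m * (Real.Gamma (n + a + 1) /
      ((Nat.factorial (n - m)) * Real.Gamma (a + m + 1) * (Nat.factorial m))) * x ^ m

/-- Gamma measure `μ_a` on `(0,∞)`. -/
def gammaMeasure (a : ℝ) : Measure ℝ :=
  (volume.restrict (Set.Ioi (0 : ℝ))).withDensity fun x =>
    ENNReal.ofReal (x ^ a * Real.exp (-x) / Real.Gamma (a + 1))

/-- Partial sums of the Jacobi–Riesz transform series of `f`. -/
def jacobiRieszPartial (a b : ℝ) (f : ℝ → ℝ) (N : ℕ) (x : ℝ) : ℝ :=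
  ∑ k ∈ Finset.Icc 1 N,
    ((∫ y, f y * jacobiP a b k y ∂jacobiMeasure a b) /
        (∫ y, (jacobiP a b k y) ^ 2 ∂jacobiMeasure a b)) *
      (((k : ℝ) + a + b + 1) / 2) / Real.sqrt ((k : ℝ) * ((k : ℝ) + a + b + 1)) *
      Real.sqrt (1 - x ^ 2) * jacobiP (a + 1) (b + 1) (k - 1) x

/-- `g` is the Jacobi–Riesz transform of `f` (as an `L²(μ_{a,b})` limit of partial sums). -/
def IsJacobiRiesz (a b : ℝ) (f g : ℝ → ℝ) : Prop :=
  Tendsto (fun N => eLpNorm (fun x => jacobiRieszPartial a b f N x - g x) 2 (jacobiMeasure a b))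
    atTop (nhds 0)

/-- Partial sums of the Gegenbauer–Riesz transform series of `f`. -/
def gegenbauerRieszPartial (l : ℝ) (f : ℝ → ℝ) (N : ℕ) (x : ℝ) : ℝ :=
  (1 / 2) * ∑ k ∈ Finset.Icc 1 N,
    (∫ y, f y * gegenbauerC l k y ∂gegenbauerMeasure l) *
      (4 * Real.Gamma (2 * l) * ((k : ℝ) + l) * Nat.factorial k / Real.Gamma (k + 2 * l + 1)) *
      Real.sqrt (((k : ℝ) + 2 * l) / k) * Real.sqrt (1 - x ^ 2) * gegenbauerC (l + 1) (k - 1) x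

/-- `g` is the Gegenbauer–Riesz transform of `f` (as an `L²(μ_l)` limit of partial sums). -/
def IsGegenbauerRiesz (l : ℝ) (f g : ℝ → ℝ) : Prop :=
  Tendsto (fun N => eLpNorm (fun x => gegenbauerRieszPartial l f N x - g x) 2 (gegenbauerMeasure l))
    atTop (nhds 0)

/-- Partial sums of the Gaussian–Riesz transform series of `f`. -/
def gaussRieszPartial (f : ℝ → ℝ) (N : ℕ) (x : ℝ) : ℝ :=
  ∑ k ∈ Finset.Icc 1 N,
    ((∫ y, f y * hermiteH k y ∂gaussMeasure) / (2 ^ k * Nat.factorial k)) *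
      Real.sqrt (2 * k) * hermiteH (k - 1) x

/-- `g` is the Gaussian–Riesz transform of `f` (as an `L²(γ)` limit of partial sums). -/
def IsGaussRiesz (f g : ℝ → ℝ) : Prop :=
  Tendsto (fun N => eLpNorm (fun x => gaussRieszPartial f N x - g x) 2 gaussMeasure)
    atTop (nhds 0)

/-- Partial sums of the Laguerre–Riesz transform series of `f`. -/
def laguerreRieszPartial (a : ℝ) (f : ℝ → ℝ) (N : ℕ) (x : ℝ) : ℝ :=
  -∑ k ∈ Finset.Icc 1 N,
    (Real.Gamma (a + 1) * Nat.factorial k / Real.Gamma (k + a + 1)) *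
      ((∫ y, f y * laguerreL a k y ∂gammaMeasure a) / Real.sqrt k) *
      Real.sqrt x * laguerreL (a + 1) (k - 1) x

/-- `g` is the Laguerre–Riesz transform of `f` (as an `L²(μ_a)` limit of partial sums). -/
def IsLaguerreRiesz (a : ℝ) (f g : ℝ → ℝ) : Prop :=
  Tendsto (fun N => eLpNorm (fun x => laguerreRieszPartial a f N x - g x) 2 (gammaMeasure a))
    atTop (nhds 0)

/-!
The substitution `x = 1 - 2t/β` turns `⟨f_β, P_k^{(α,β)}⟩_{μ_{α,β}}` into
`c_β ∫_{(0,β)} f(t) P_k^{(α,β)}(1 - 2t/β) (1 - t/β)^β e^t dμ_α(t)` with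
`c_β = Γ(α+β+2) / (β^{α+1} Γ(β+1))`, and `c_β → 1` by Gautschi's inequality
(log-convexity of `Γ`). Expanding `P_k^{(α,β)}(1 - 2t/β)` shows that it tends to `L_k^α(t)`
and is bounded by `C (1 + t)^k` for `β ≥ 1`, while `0 ≤ (1 - t/β)^β e^t ≤ 1` tends to `1`.
Since `f` and `(1 + t)^k` lie in `L²(μ_α)`, their product is `μ_α`-integrable and dominated
convergence applies.
-/
lemma tendsto_add_const_div_self_atTop (c : ℝ) :
    Tendsto (fun x : ℝ => (x + c) / x) atTop (nhds 1) := by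
  have h : Tendsto (fun x : ℝ => 1 + c / x) atTop (nhds (1 + 0)) :=
    tendsto_const_nhds.add (tendsto_const_nhds.div_atTop tendsto_id)
  rw [add_zero] at h
  refine h.congr' ?_
  filter_upwards [eventually_ne_atTop 0] with x hx
  field_simp

namespace Real

lemma Gamma_add_le_Gamma_mul_rpow {x s : ℝ} (hx : 0 < x) (hs₀ : 0 ≤ s) (hs₁ : s ≤ 1) :
    Gamma (x + s) ≤ Gamma x * x ^ s := by
  rcases hs₀.eq_or_lt with rfl | hs₀
  · simp
  rcases hs₁.eq_or_lt with rfl | hs₁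
  · rw [Gamma_add_one hx.ne', rpow_one, mul_comm]
  have h := Gamma_mul_add_mul_le_rpow_Gamma_mul_rpow_Gamma hx (by linarith : 0 < x + 1)
    (sub_pos.2 hs₁) hs₀ (sub_add_cancel 1 s)
  have hΓ := Gamma_pos_of_pos hx
  rwa [show (1 - s) * x + s * (x + 1) = x + s by ring, Gamma_add_one hx.ne',
    mul_rpow hx.le hΓ.le, mul_comm (x ^ s), ← mul_assoc, ← rpow_add hΓ, sub_add_cancel,
    rpow_one] at h

lemma tendsto_Gamma_add_div_rpow_mul_Gamma_of_le_one {s : ℝ} (hs₀ : 0 < s) (hs₁ : s ≤ 1) :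
    Tendsto (fun x => Gamma (x + s) / (x ^ s * Gamma x)) atTop (nhds 1) := by
  have hlow : Tendsto (fun x : ℝ => (x / (x + s)) ^ (1 - s)) atTop (nhds 1) := by
    have h := (tendsto_add_const_div_self_atTop s).inv₀ one_ne_zero
    simp only [inv_div, inv_one] at h
    simpa using h.rpow_const (p := 1 - s) (Or.inl one_ne_zero)
  refine tendsto_of_tendsto_of_tendsto_of_le_of_le' hlow tendsto_const_nhds ?_ ?_
  · filter_upwards [eventually_gt_atTop 0] with x hx
    have hxs : 0 < x + s := by linarith
    -- Gautschi's lower bound: the upper bound at `x + s` with exponent `1 - s`.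
    have h := Gamma_add_le_Gamma_mul_rpow hxs (sub_nonneg.2 hs₁) (by linarith)
    rw [add_add_sub_cancel, Gamma_add_one hx.ne'] at h
    rw [div_rpow hx.le hxs.le, div_le_div_iff₀ (by positivity) (by positivity),
      ← mul_assoc, ← rpow_add hx, sub_add_cancel, rpow_one]
    exact h
  · filter_upwards [eventually_gt_atTop 0] with x hx
    rw [div_le_one (by positivity), mul_comm]
    exact Gamma_add_le_Gamma_mul_rpow hx hs₀.le hs₁

lemma tendsto_Gamma_add_div_rpow_mul_Gamma {s : ℝ} (hs : 0 < s) :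
    Tendsto (fun x => Gamma (x + s) / (x ^ s * Gamma x)) atTop (nhds 1) := by
  obtain ⟨n, hn⟩ := exists_nat_ge s
  induction n generalizing s with
  | zero => exact absurd hn (by simpa using hs)
  | succ n ih =>
    rcases le_or_gt s 1 with hs₁ | hs₁
    · exact tendsto_Gamma_add_div_rpow_mul_Gamma_of_le_one hs hs₁
    have h := (ih (sub_pos.2 hs₁) (by push_cast at hn; linarith)).mul
      (tendsto_add_const_div_self_atTop (s - 1))
    rw [mul_one] at h
    refine h.congr' ?_
    filter_upwards [eventually_gt_atTop 0] with x hx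
    have hxs : 0 < x + (s - 1) := by linarith
    rw [show x + s = x + (s - 1) + 1 by ring, Gamma_add_one hxs.ne',
      show x ^ s = x ^ (s - 1) * x by rw [← rpow_add_one hx.ne', sub_add_cancel]]
    have := Gamma_pos_of_pos hx
    field_simp

lemma Gamma_add_nat_eq_mul_prod {x : ℝ} (hx : 0 < x) (n : ℕ) :
    Gamma (x + n) = Gamma x * ∏ j ∈ Finset.range n, (x + j) := by
  induction n with
  | zero => simp
  | succ n ih =>
    rw [Nat.cast_succ, ← add_assoc, Gamma_add_one (by positivity), ih,
      Finset.prod_range_succ]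
    ring

end Real

lemma one_sub_div_rpow_mul_exp_le_one {b t : ℝ} (hb : 0 < b) (ht : t ≤ b) :
    (1 - t / b) ^ b * Real.exp t ≤ 1 := by
  have hsub : 0 ≤ 1 - t / b := by rw [sub_nonneg, div_le_one hb]; exact ht
  have h : (1 - t / b) ^ b ≤ Real.exp (-t) := by
    calc (1 - t / b) ^ b ≤ Real.exp (-(t / b)) ^ b :=
          Real.rpow_le_rpow hsub (by linarith [Real.add_one_le_exp (-(t / b))]) hb.le
      _ = Real.exp (-t) := by rw [← Real.exp_mul, neg_mul, div_mul_cancel₀ _ hb.ne']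
  calc (1 - t / b) ^ b * Real.exp t ≤ Real.exp (-t) * Real.exp t := by gcongr
    _ = 1 := by rw [← Real.exp_add, neg_add_cancel, Real.exp_zero]

lemma tendsto_Gamma_add_two_div_rpow_mul_Gamma {a : ℝ} (ha : 0 < a + 2) :
    Tendsto (fun b => Real.Gamma (a + b + 2) / (b ^ (a + 1) * Real.Gamma (b + 1))) atTop
      (nhds 1) := by
  refine (Real.tendsto_Gamma_add_div_rpow_mul_Gamma ha).congr' ?_
  filter_upwards [eventually_gt_atTop 0] with b hb
  rw [Real.Gamma_add_one hb.ne', show b + (a + 2) = a + b + 2 by ring,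
    show a + 2 = a + 1 + 1 by ring, Real.rpow_add_one hb.ne']
  ring

section WithDensity

variable {α : Type*} [MeasurableSpace α] {μ : Measure α} {s : Set α} {ρ : α → ℝ}

lemma integral_restrict_withDensity_ofReal (hs : MeasurableSet s)
    (hρ : AEMeasurable ρ (μ.restrict s)) (hρ₀ : ∀ x ∈ s, 0 ≤ ρ x) (g : α → ℝ) :
    ∫ x, g x ∂(μ.restrict s).withDensity (fun x => ENNReal.ofReal (ρ x)) =
      ∫ x in s, g x * ρ x ∂μ := by
  rw [integral_withDensity_eq_integral_toReal_smul₀ hρ.ennreal_ofReal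
    (ae_of_all _ fun _ => ENNReal.ofReal_lt_top)]
  refine setIntegral_congr_fun hs fun x hx => ?_
  rw [ENNReal.toReal_ofReal (hρ₀ x hx), smul_eq_mul, mul_comm]

lemma integrable_restrict_withDensity_ofReal_iff (hs : MeasurableSet s)
    (hρ : AEMeasurable ρ (μ.restrict s)) (hρ₀ : ∀ x ∈ s, 0 ≤ ρ x) {g : α → ℝ} :
    Integrable g ((μ.restrict s).withDensity fun x => ENNReal.ofReal (ρ x)) ↔
      IntegrableOn (fun x => g x * ρ x) s μ := by
  rw [integrable_withDensity_iff_integrable_smul₀' hρ.ennreal_ofReal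
    (ae_of_all _ fun _ => ENNReal.ofReal_lt_top)]
  refine integrable_congr ?_
  filter_upwards [ae_restrict_mem hs] with x hx
  rw [ENNReal.toReal_ofReal (hρ₀ x hx), smul_eq_mul, mul_comm]

end WithDensity

section GammaMeasure

variable {a : ℝ}

lemma gammaDensity_nonneg (ha : -1 < a) {x : ℝ} (hx : x ∈ Set.Ioi 0) :
    0 ≤ x ^ a * Real.exp (-x) / Real.Gamma (a + 1) := by
  have := Real.Gamma_pos_of_pos (neg_lt_iff_pos_add.1 ha)
  have := Real.rpow_nonneg (le_of_lt hx) a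
  positivity

variable (a) in
lemma measurable_gammaDensity :
    Measurable fun x : ℝ => x ^ a * Real.exp (-x) / Real.Gamma (a + 1) := by
  fun_prop

lemma integral_gammaMeasure (ha : -1 < a) (g : ℝ → ℝ) :
    ∫ x, g x ∂gammaMeasure a =
      ∫ x in Set.Ioi 0, g x * (x ^ a * Real.exp (-x) / Real.Gamma (a + 1)) :=
  integral_restrict_withDensity_ofReal measurableSet_Ioi
    (measurable_gammaDensity a).aemeasurable (fun _ => gammaDensity_nonneg ha) g

lemma integrable_pow_gammaMeasure (ha : -1 < a) (n : ℕ) :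
    Integrable (fun x : ℝ => x ^ n) (gammaMeasure a) := by
  rw [gammaMeasure, integrable_restrict_withDensity_ofReal_iff measurableSet_Ioi
    (measurable_gammaDensity a).aemeasurable (fun _ => gammaDensity_nonneg ha)]
  have hconv : 0 < a + n + 1 := by have := n.cast_nonneg (α := ℝ); linarith
  refine IntegrableOn.congr_fun
    ((Real.GammaIntegral_convergent hconv).div_const (Real.Gamma (a + 1)))
    (fun x (hx : 0 < x) => ?_) measurableSet_Ioi
  rw [add_sub_cancel_right, Real.rpow_add hx, Real.rpow_natCast]
  ring

lemma memLp_pow_gammaMeasure (ha : -1 < a) (n : ℕ) :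
    MemLp (fun x : ℝ => x ^ n) 2 (gammaMeasure a) := by
  rw [memLp_two_iff_integrable_sq (by fun_prop)]
  simpa only [← pow_mul] using integrable_pow_gammaMeasure ha (n * 2)

lemma memLp_one_add_pow_gammaMeasure (ha : -1 < a) (n : ℕ) :
    MemLp (fun x : ℝ => (1 + x) ^ n) 2 (gammaMeasure a) := by
  have h := memLp_finsetSum (Finset.range (n + 1))
    fun m _ => (memLp_pow_gammaMeasure ha m).mul_const (n.choose m : ℝ)
  convert h using 2 with x
  rw [add_comm, add_pow]
  simp only [one_pow, mul_one]

end GammaMeasure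

section JacobiLaguerre

variable (a : ℝ) (n : ℕ)

def laguerreCoeff (m : ℕ) : ℝ :=
  Real.Gamma (n + a + 1) / ((Nat.factorial (n - m)) * Real.Gamma (a + m + 1) * (Nat.factorial m))

lemma jacobiP_one_sub_two_mul_div {b : ℝ} (hb : 0 < b) (t : ℝ) :
    jacobiP a b n (1 - 2 * t / b) =
      ∑ ν ∈ Finset.range (n + 1), (-1 : ℝ) ^ ν * laguerreCoeff a n ν * t ^ ν *
        (∏ j ∈ Finset.range ν, (b + (n - ν + 1 + j)) / b) * (1 - t / b) ^ (n - ν) := by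
  refine Finset.sum_congr rfl fun ν hν => ?_
  have hνn : (ν : ℝ) ≤ n := by exact_mod_cast Nat.lt_succ_iff.mp (Finset.mem_range.mp hν)
  have hx : 0 < n + b - ν + 1 := by linarith
  have hΓ : Real.Gamma (n + b + 1) =
      Real.Gamma (n + b - ν + 1) * ∏ j ∈ Finset.range ν, (b + (n - ν + 1 + j)) := by
    rw [show (n : ℝ) + b + 1 = n + b - ν + 1 + ν by ring, Real.Gamma_add_nat_eq_mul_prod hx]
    congr 1
    exact Finset.prod_congr rfl fun j _ => by ring
  rw [hΓ, Finset.prod_div_distrib, Finset.prod_const, Finset.card_range,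
    show (1 - 2 * t / b - 1) / 2 = -t / b by ring, show (1 - 2 * t / b + 1) / 2 = 1 - t / b by ring,
    div_pow, neg_pow]
  have := (Real.Gamma_pos_of_pos hx).ne'
  rw [laguerreCoeff]
  field_simp

lemma tendsto_jacobiP_one_sub_two_mul_div (t : ℝ) :
    Tendsto (fun b => jacobiP a b n (1 - 2 * t / b)) atTop (nhds (laguerreL a n t)) := by
  have hlim : Tendsto (fun b : ℝ => ∑ ν ∈ Finset.range (n + 1), (-1 : ℝ) ^ ν *
      laguerreCoeff a n ν * t ^ ν *
      (∏ j ∈ Finset.range ν, (b + (n - ν + 1 + j)) / b) * (1 - t / b) ^ (n - ν))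
      atTop (nhds (laguerreL a n t)) := by
    have hsub : Tendsto (fun b : ℝ => 1 - t / b) atTop (nhds 1) := by
      simpa using tendsto_const_nhds.sub (tendsto_const_nhds (x := t).div_atTop tendsto_id)
    have h := tendsto_finsetSum (Finset.range (n + 1)) fun ν _ =>
      (tendsto_const_nhds (x := (-1 : ℝ) ^ ν * laguerreCoeff a n ν * t ^ ν)).mul
        (tendsto_finsetProd (Finset.range ν) fun j _ =>
          tendsto_add_const_div_self_atTop ((n : ℝ) - ν + 1 + j)) |>.mul (hsub.pow (n - ν))
    simpa [laguerreL, laguerreCoeff, mul_comm, mul_assoc, mul_left_comm] using h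
  refine hlim.congr' ?_
  filter_upwards [eventually_gt_atTop 0] with b hb
  exact (jacobiP_one_sub_two_mul_div a n hb t).symm

lemma exists_abs_jacobiP_one_sub_two_mul_div_le :
    ∃ C, 0 ≤ C ∧ ∀ b, 1 ≤ b → ∀ t ∈ Set.Icc 0 b,
      |jacobiP a b n (1 - 2 * t / b)| ≤ C * (1 + t) ^ n := by
  refine ⟨∑ ν ∈ Finset.range (n + 1), |laguerreCoeff a n ν| * (n + 1) ^ ν,
    by positivity, fun b hb t ⟨ht₀, htb⟩ => ?_⟩
  have hb₀ : 0 < b := by linarith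
  rw [jacobiP_one_sub_two_mul_div a n hb₀, Finset.sum_mul]
  refine (Finset.abs_sum_le_sum_abs _ _).trans (Finset.sum_le_sum fun ν hν => ?_)
  have hνn : ν ≤ n := Nat.lt_succ_iff.mp (Finset.mem_range.mp hν)
  have hfactor : ∀ j ∈ Finset.range ν, |(b + (n - ν + 1 + j)) / b| ≤ n + 1 := by
    intro j hj
    have hj : (j : ℝ) + 1 ≤ ν := by exact_mod_cast Finset.mem_range.mp hj
    have hνn : (ν : ℝ) ≤ n := by exact_mod_cast hνn
    rw [abs_of_nonneg (by have := j.cast_nonneg (α := ℝ); positivity), div_le_iff₀ hb₀]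
    nlinarith
  have hprod : |∏ j ∈ Finset.range ν, (b + (n - ν + 1 + j)) / b| ≤ (n + 1) ^ ν := by
    rw [Finset.abs_prod]
    simpa using Finset.prod_le_prod (fun j _ => abs_nonneg _) hfactor
  have htpow : |t| ^ ν ≤ (1 + t) ^ n := by
    rw [abs_of_nonneg ht₀]
    exact (pow_le_pow_left₀ ht₀ (by linarith) ν).trans
      (pow_le_pow_right₀ (by linarith) hνn)
  have hsub : |1 - t / b| ^ (n - ν) ≤ 1 := by
    refine pow_le_one₀ (abs_nonneg _) (abs_le.2 ⟨?_, ?_⟩)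
    · have : t / b ≤ 1 := (div_le_one hb₀).2 htb
      linarith
    · have : 0 ≤ t / b := by positivity
      linarith
  simp only [abs_mul, abs_pow, abs_neg, abs_one, one_pow, one_mul]
  calc _ ≤ |laguerreCoeff a n ν| * (1 + t) ^ n * (n + 1) ^ ν * 1 := by gcongr
    _ = _ := by ring

end JacobiLaguerre

lemma integral_Ioo_neg_one_one_eq_integral_Ioo {c : ℝ} (hc : 0 < c) (G : ℝ → ℝ) :
    ∫ x in Set.Ioo (-1) 1, G x = ∫ t in Set.Ioo 0 c, 2 / c * G (1 - 2 * t / c) := by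
  have h := intervalIntegral.integral_comp_sub_mul (a := 0) (b := c) G
    (div_ne_zero two_ne_zero hc.ne') 1
  rw [mul_zero, sub_zero, div_mul_cancel₀ _ hc.ne', show (1 : ℝ) - 2 = -1 by norm_num] at h
  rw [integral_const_mul, ← integral_Ioc_eq_integral_Ioo, ← integral_Ioc_eq_integral_Ioo,
    ← intervalIntegral.integral_of_le (by norm_num), ← intervalIntegral.integral_of_le hc.le]
  simp only [div_mul_eq_mul_div] at h
  rw [h, smul_eq_mul, ← mul_assoc, mul_inv_cancel₀ (div_ne_zero two_ne_zero hc.ne'), one_mul]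

section JacobiMeasure

variable {a b : ℝ}

lemma jacobiDensity_nonneg (ha : -1 < a) (hb : -1 < b) {x : ℝ} (hx : x ∈ Set.Ioo (-1) 1) :
    0 ≤ (1 - x) ^ a * (1 + x) ^ b *
      (Real.Gamma (a + b + 2) / (2 ^ (a + b + 1) * Real.Gamma (a + 1) * Real.Gamma (b + 1))) := by
  have := Real.Gamma_pos_of_pos (show 0 < a + b + 2 by linarith)
  have := Real.Gamma_pos_of_pos (show 0 < a + 1 by linarith)
  have := Real.Gamma_pos_of_pos (show 0 < b + 1 by linarith)
  have := Real.rpow_nonneg (show (0 : ℝ) ≤ 1 - x by linarith [hx.2]) a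
  have := Real.rpow_nonneg (show (0 : ℝ) ≤ 1 + x by linarith [hx.1]) b
  positivity

lemma integral_jacobiMeasure (ha : -1 < a) (hb : -1 < b) (g : ℝ → ℝ) :
    ∫ x, g x ∂jacobiMeasure a b = ∫ x in Set.Ioo (-1) 1, g x * ((1 - x) ^ a * (1 + x) ^ b *
      (Real.Gamma (a + b + 2) / (2 ^ (a + b + 1) * Real.Gamma (a + 1) * Real.Gamma (b + 1)))) :=
  integral_restrict_withDensity_ofReal measurableSet_Ioo (by fun_prop)
    (fun _ => jacobiDensity_nonneg ha hb) g

lemma integral_jacobiMeasure_eq_integral_gammaMeasure (ha : -1 < a) (hb : 0 < b) (g : ℝ → ℝ) :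
    ∫ x, g x ∂jacobiMeasure a b = Real.Gamma (a + b + 2) / (b ^ (a + 1) * Real.Gamma (b + 1)) *
      ∫ t, (Set.Ioo 0 b).indicator
        (fun t => g (1 - 2 * t / b) * ((1 - t / b) ^ b * Real.exp t)) t ∂gammaMeasure a := by
  rw [integral_jacobiMeasure ha (by linarith), integral_Ioo_neg_one_one_eq_integral_Ioo hb,
    integral_gammaMeasure ha, ← integral_const_mul]
  have hIoo : Set.Ioi 0 ∩ Set.Ioo 0 b = Set.Ioo 0 b :=
    Set.inter_eq_right.2 Set.Ioo_subset_Ioi_self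
  conv_lhs => rw [← hIoo, ← setIntegral_indicator measurableSet_Ioo]
  refine setIntegral_congr_fun measurableSet_Ioi fun t _ => ?_
  by_cases ht : t ∈ Set.Ioo 0 b
  swap
  · simp [ht]
  rw [Set.indicator_of_mem ht, Set.indicator_of_mem ht]
  obtain ⟨ht₀, htb⟩ := ht
  have hsub : 0 ≤ 1 - t / b := by rw [sub_nonneg, div_le_one hb]; exact htb.le
  rw [show 1 - (1 - 2 * t / b) = 2 * t / b by ring,
    show 1 + (1 - 2 * t / b) = 2 * (1 - t / b) by ring,
    Real.div_rpow (by positivity) hb.le, Real.mul_rpow (by norm_num) ht₀.le,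
    Real.mul_rpow (by norm_num) hsub, Real.rpow_add (by norm_num), Real.rpow_add (by norm_num),
    Real.rpow_add hb, Real.rpow_one, Real.rpow_one, Real.exp_neg]
  have := Real.Gamma_pos_of_pos (show 0 < a + 1 by linarith)
  have := Real.Gamma_pos_of_pos (show 0 < b + 1 by linarith)
  have := Real.rpow_pos_of_pos hb a
  have := Real.rpow_pos_of_pos (show (0 : ℝ) < 2 by norm_num) a
  have := Real.rpow_pos_of_pos (show (0 : ℝ) < 2 by norm_num) b
  field_simp

end JacobiMeasure

lemma tendsto_integral_indicator_jacobiP_gammaMeasure {a : ℝ} (ha : -1 < a) {f : ℝ → ℝ}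
    (hf : MemLp f 2 (gammaMeasure a)) (k : ℕ) :
    Tendsto (fun b => ∫ t, (Set.Ioo 0 b).indicator
        (fun t => f t * jacobiP a b k (1 - 2 * t / b) * ((1 - t / b) ^ b * Real.exp t)) t
        ∂gammaMeasure a)
      atTop (nhds (∫ t, f t * laguerreL a k t ∂gammaMeasure a)) := by
  obtain ⟨C, hC, hCb⟩ := exists_abs_jacobiP_one_sub_two_mul_div_le a k
  have hpos : ∀ᵐ t ∂gammaMeasure a, 0 < t :=
    (withDensity_absolutelyContinuous _ _).ae_le (ae_restrict_mem measurableSet_Ioi)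
  refine tendsto_integral_filter_of_dominated_convergence
    (fun t => C * (|f t| * (1 + t) ^ k)) ?_ ?_ ?_ ?_
  · refine Eventually.of_forall fun b => AEStronglyMeasurable.indicator ?_ measurableSet_Ioo
    have hP : Continuous (jacobiP a b k) := by unfold jacobiP; fun_prop
    exact (hf.1.mul (by fun_prop)).mul (by fun_prop)
  · filter_upwards [eventually_ge_atTop 1] with b hb
    filter_upwards [hpos] with t ht₀
    by_cases htb : t < b
    swap
    · rw [Set.indicator_of_notMem fun h => htb h.2, norm_zero]
      positivity
    have hsub : 0 ≤ 1 - t / b := by rw [sub_nonneg, div_le_one (by linarith)]; exact htb.le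
    have hw₀ : 0 ≤ (1 - t / b) ^ b * Real.exp t := by
      have := Real.rpow_nonneg hsub b
      positivity
    have hw₁ := one_sub_div_rpow_mul_exp_le_one (by linarith) htb.le
    have hP := hCb b hb t ⟨ht₀.le, htb.le⟩
    rw [Set.indicator_of_mem (Set.mem_Ioo.2 ⟨ht₀, htb⟩), Real.norm_eq_abs, abs_mul, abs_mul,
      abs_of_nonneg hw₀]
    calc |f t| * |jacobiP a b k (1 - 2 * t / b)| * ((1 - t / b) ^ b * Real.exp t)
        ≤ |f t| * (C * (1 + t) ^ k) * 1 := by gcongr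
      _ = C * (|f t| * (1 + t) ^ k) := by ring
  · refine ((hf.integrable_mul (memLp_one_add_pow_gammaMeasure ha k)).abs.const_mul C).congr ?_
    filter_upwards [hpos] with t ht
    rw [Pi.mul_apply, abs_mul, abs_of_nonneg (by positivity : (0 : ℝ) ≤ (1 + t) ^ k)]
  · filter_upwards [hpos] with t ht
    have hweight : Tendsto (fun b => (1 - t / b) ^ b * Real.exp t) atTop (nhds 1) := by
      have h := (tendsto_one_add_div_rpow_exp (-t)).mul_const (Real.exp t)
      rw [← Real.exp_add, neg_add_cancel, Real.exp_zero] at h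
      simpa only [neg_div, ← sub_eq_add_neg] using h
    have h := ((tendsto_jacobiP_one_sub_two_mul_div a k t).const_mul (f t)).mul hweight
    rw [mul_one] at h
    refine h.congr' ?_
    filter_upwards [eventually_gt_atTop t] with b hb
    rw [Set.indicator_of_mem (Set.mem_Ioo.2 ⟨ht, hb⟩)]

/-- Inner product relation: `⟨f_β, P_k^{(α,β)}⟩_{μ_{α,β}} → ⟨f, L_k^α⟩_{μ_α}` as `β → ∞`. -/
theorem stmt_7 (a : ℝ) (ha : -1 < a) (f : ℝ → ℝ) (hf : MemLp f 2 (gammaMeasure a)) (k : ℕ) :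
    Tendsto (fun b : ℝ =>
        ∫ x, Set.indicator (Set.Icc (-1 : ℝ) 1) (fun y => f (b / 2 * (1 - y))) x *
          jacobiP a b k x ∂jacobiMeasure a b)
      atTop (nhds (∫ x, f x * laguerreL a k x ∂gammaMeasure a)) := by
  have h := (tendsto_Gamma_add_two_div_rpow_mul_Gamma (by linarith : 0 < a + 2)).mul
    (tendsto_integral_indicator_jacobiP_gammaMeasure ha hf k)
  rw [one_mul] at h
  refine h.congr' ?_
  filter_upwards [eventually_gt_atTop 0] with b hb
  rw [integral_jacobiMeasure_eq_integral_gammaMeasure ha hb]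
  congr 2
  refine Set.indicator_congr fun t ⟨ht₀, htb⟩ => ?_
  have hx : 1 - 2 * t / b ∈ Set.Icc (-1) 1 := by
    have : t / b < 1 := (div_lt_one hb).2 htb
    rw [mul_div_assoc]
    constructor <;> linarith [div_pos ht₀ hb]
  rw [Set.indicator_of_mem hx, show b / 2 * (1 - (1 - 2 * t / b)) = t by field_simp; ring]

end
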